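/- (Discrete gradient estimate) There exists a constant C > 0 such that for every positive integer N, every function u discrete harmonic on Q_N, and every pair of adjacent lattice points q, q' ∈ Q_{⌊N/3⌋} (i.e. |q − q'| = 1 in ℤ²), one has |u(q) − u(q')| ≤ C·N^{−1}·max_{Q_N} |u|. -/

import Mathlib

/-
Bernstein's method. Fix a unit vector `e`, let `v = u(· + e) - u`, `K = ⌊N/3⌋`, and use the
cut-off `η = K² - |x - q|²`. Since `u` and `v` are harmonic, `Δ(u²) = |∇u|² ≥ v²` and
`Δ(v²) = |∇v|²`, and these two absorb the error terms of `Δ(η²v²)`; so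
`G = η²v² + 3K²v² + 296K²u² + M²|x - q|²` is strictly subharmonic on the disc `|x - q| ≤ K`.
Its maximum over the disc of radius `K + 1` is therefore attained at some `x` with
`K < |x - q| ≤ K + 1`, where `η(x)² ≤ 9K²`, and `K⁴v(q)² ≤ G(q) ≤ G(x) ≤ 348 K²M²`.
-/

/-- The square `Q_N = {(n,m) : |n| ≤ N, |m| ≤ N}` as a finite set. -/
noncomputable def Q (N : ℕ) : Finset (ℤ × ℤ) := Finset.Icc (-(N : ℤ)) N ×ˢ Finset.Icc (-(N : ℤ)) N

/-- `u` is discrete harmonic on `Q_N`: the mean value property holds at all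
interior points `(n,m)` with `|n| ≤ N-1`, `|m| ≤ N-1`. -/
def DiscreteHarmonicOn (N : ℕ) (u : ℤ × ℤ → ℝ) : Prop :=
  ∀ n m : ℤ, |n| ≤ (N : ℤ) - 1 → |m| ≤ (N : ℤ) - 1 →
    4 * u (n, m) = u (n + 1, m) + u (n - 1, m) + u (n, m + 1) + u (n, m - 1)

open Finset

lemma mem_Q {n : ℕ} {x : ℤ × ℤ} : x ∈ Q n ↔ |x.1| ≤ n ∧ |x.2| ≤ n := by
  simp [Q, abs_le]

lemma Q_mono {m n : ℕ} (h : m ≤ n) : Q m ⊆ Q n := by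
  intro x hx
  rw [mem_Q] at hx ⊢
  omega

def unitDir : Fin 4 → ℤ × ℤ := ![(1, 0), (-1, 0), (0, 1), (0, -1)]

lemma add_unitDir_mem_Q {n : ℕ} {x : ℤ × ℤ} (hx : x ∈ Q n) (i : Fin 4) :
    x + unitDir i ∈ Q (n + 1) := by
  simp only [mem_Q, abs_le] at hx ⊢
  fin_cases i <;>
    simp only [unitDir, Fin.isValue, Matrix.cons_val_zero, Matrix.cons_val_one, Matrix.cons_val,
      Fin.zero_eta, Fin.mk_one, Fin.reduceFinMk, Prod.fst_add, Prod.snd_add, add_zero] <;>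
    omega

def laplacian (f : ℤ × ℤ → ℝ) (x : ℤ × ℤ) : ℝ := ∑ i, fwdDiff (unitDir i) f x

lemma laplacian_apply (f : ℤ × ℤ → ℝ) (x : ℤ × ℤ) :
    laplacian f x = ∑ i, f (x + unitDir i) - 4 * f x := by
  simp [laplacian, fwdDiff, sum_sub_distrib]

lemma laplacian_add (f g : ℤ × ℤ → ℝ) (x : ℤ × ℤ) :
    laplacian (fun y ↦ f y + g y) x = laplacian f x + laplacian g x := by
  simp only [laplacian_apply, sum_add_distrib]
  ring

lemma laplacian_const_mul (c : ℝ) (f : ℤ × ℤ → ℝ) (x : ℤ × ℤ) :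
    laplacian (fun y ↦ c * f y) x = c * laplacian f x := by
  simp only [laplacian_apply, ← mul_sum]
  ring

lemma laplacian_sq (f : ℤ × ℤ → ℝ) (x : ℤ × ℤ) :
    laplacian (fun y ↦ f y ^ 2) x =
      ∑ i, fwdDiff (unitDir i) f x ^ 2 + 2 * f x * laplacian f x := by
  simp only [laplacian, mul_sum, ← sum_add_distrib, fwdDiff]
  exact sum_congr rfl fun i _ ↦ by ring

lemma laplacian_fwdDiff (a : ℤ × ℤ) (f : ℤ × ℤ → ℝ) (x : ℤ × ℤ) :
    laplacian (fwdDiff a f) x = laplacian f (x + a) - laplacian f x := by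
  simp only [laplacian_apply, fwdDiff, sum_sub_distrib, add_right_comm _ a]
  ring

lemma DiscreteHarmonicOn.laplacian_eq_zero {N n : ℕ} {u : ℤ × ℤ → ℝ}
    (hu : DiscreteHarmonicOn N u) (hn : n < N) {x : ℤ × ℤ} (hx : x ∈ Q n) :
    laplacian u x = 0 := by
  obtain ⟨ha, hb⟩ := mem_Q.mp hx
  have := hu x.1 x.2 (by omega) (by omega)
  obtain ⟨a, b⟩ := x
  simp only [laplacian_apply, Fin.sum_univ_four, unitDir, Fin.isValue, Matrix.cons_val_zero,
    Matrix.cons_val_one, Matrix.cons_val, Prod.mk_add_mk, add_zero, sub_eq_add_neg] at this ⊢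
  linear_combination -this

def distSq (q x : ℤ × ℤ) : ℤ := (x.1 - q.1) ^ 2 + (x.2 - q.2) ^ 2

lemma laplacian_distSq (q x : ℤ × ℤ) : laplacian (fun y ↦ (distSq q y : ℝ)) x = 4 := by
  simp only [laplacian_apply, Fin.sum_univ_four, distSq, unitDir, Fin.isValue,
    Matrix.cons_val_zero, Matrix.cons_val_one, Matrix.cons_val, Prod.fst_add, Prod.snd_add]
  push_cast
  ring

lemma abs_sub_le_of_distSq_le {q x : ℤ × ℤ} {r : ℤ} (hr : 0 ≤ r) (h : distSq q x ≤ r ^ 2) :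
    |x.1 - q.1| ≤ r ∧ |x.2 - q.2| ≤ r := by
  unfold distSq at h
  exact ⟨abs_le_of_sq_le_sq (by nlinarith [sq_nonneg (x.2 - q.2)]) hr,
    abs_le_of_sq_le_sq (by nlinarith [sq_nonneg (x.1 - q.1)]) hr⟩

lemma abs_distSq_add_unitDir_sub_le {q x : ℤ × ℤ} {r : ℤ} (hr : 0 ≤ r)
    (h : distSq q x ≤ r ^ 2) (i : Fin 4) :
    |distSq q (x + unitDir i) - distSq q x| ≤ 2 * r + 1 := by
  obtain ⟨h₁, h₂⟩ := abs_sub_le_of_distSq_le hr h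
  rw [abs_le] at h₁ h₂ ⊢
  fin_cases i <;>
    simp only [distSq, unitDir, Fin.isValue, Matrix.cons_val_zero, Matrix.cons_val_one,
      Matrix.cons_val, Fin.zero_eta, Fin.mk_one, Fin.reduceFinMk, Prod.fst_add, Prod.snd_add,
      add_zero] <;>
    constructor <;> nlinarith

lemma exists_max_not_of_laplacian_pos {S : Finset (ℤ × ℤ)} (hS : S.Nonempty)
    {f : ℤ × ℤ → ℝ} {P : ℤ × ℤ → Prop}
    (hP : ∀ x ∈ S, P x → (∀ i, x + unitDir i ∈ S) ∧ 0 < laplacian f x) :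
    ∃ x ∈ S, ¬ P x ∧ ∀ y ∈ S, f y ≤ f x := by
  obtain ⟨x, hx, hmax⟩ := S.exists_max_image f hS
  refine ⟨x, hx, fun hPx ↦ ?_, hmax⟩
  obtain ⟨hnbr, hpos⟩ := hP x hx hPx
  have : laplacian f x ≤ 0 := sum_nonpos fun i _ ↦ sub_nonpos.mpr (hmax _ (hnbr i))
  linarith

lemma quadratic_form_nonneg {a b p : ℝ} (ha : 0 ≤ a) (hb : 0 ≤ b) (h : p ^ 2 ≤ a * b)
    (x y : ℝ) : 0 ≤ a * x ^ 2 + 2 * p * x * y + b * y ^ 2 := by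
  rcases ha.eq_or_lt with rfl | ha
  · obtain rfl : p = 0 := by nlinarith
    simpa using mul_nonneg hb (sq_nonneg y)
  · refine nonneg_of_mul_nonneg_right ?_ ha
    nlinarith [sq_nonneg (a * x + p * y), mul_nonneg (sub_nonneg.mpr h) (sq_nonneg y)]

lemma neighbor_term_nonneg {K e d : ℝ} (hd : |d| ≤ 3 * K) (w V : ℝ) :
    0 ≤ ((e - d) ^ 2 + 3 * K ^ 2) * w ^ 2 + 2 * (d ^ 2 - 2 * e * d) * w * V
      + 72 * K ^ 2 * V ^ 2 := by
  refine quadratic_form_nonneg (by positivity) (by positivity) ?_ w V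
  have hd2 : d ^ 2 ≤ 9 * K ^ 2 := by nlinarith [sq_abs d, abs_nonneg d]
  calc (d ^ 2 - 2 * e * d) ^ 2 = d ^ 2 * (2 * (e - d) + d) ^ 2 := by ring
    _ ≤ 9 * K ^ 2 * (8 * (e - d) ^ 2 + 18 * K ^ 2) := by
        gcongr
        nlinarith [sq_nonneg (2 * (e - d) - d)]
    _ ≤ ((e - d) ^ 2 + 3 * K ^ 2) * (72 * K ^ 2) := by nlinarith [sq_nonneg K]

lemma bernstein_core {ι : Type*} [Fintype ι] {K e V : ℝ} {d W : ι → ℝ} (he : e ≤ K ^ 2)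
    (hd : ∀ i, |d i| ≤ 3 * K) (hd_sum : ∑ i, d i = Fintype.card ι)
    (hW_sum : ∑ i, W i = Fintype.card ι * V) :
    Fintype.card ι * (e ^ 2 * V ^ 2) ≤ ∑ i, (e - d i) ^ 2 * W i ^ 2
      + 3 * K ^ 2 * ∑ i, (W i - V) ^ 2 + 74 * Fintype.card ι * K ^ 2 * V ^ 2 := by
  -- Each summand is a quadratic form in `(W i - V, V)` with nonpositive discriminant, up to terms
  -- that are linear in `d i` or in `W i - V` and so sum to `-2 n e V²` and `0`.
  have hterm : ∀ i, e ^ 2 * V ^ 2 + 2 * K ^ 2 * V ^ 2 - 2 * e * V ^ 2 * d i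
      + 2 * V * e ^ 2 * (W i - V) ≤
      (e - d i) ^ 2 * W i ^ 2 + 3 * K ^ 2 * (W i - V) ^ 2 + 74 * K ^ 2 * V ^ 2 := fun i ↦ by
    linear_combination neighbor_term_nonneg (e := e) (hd i) (W i - V) V + sq_nonneg (d i * V)
  have hsum := sum_le_sum fun i (_ : i ∈ univ) ↦ hterm i
  simp only [sum_add_distrib, sum_sub_distrib, ← mul_sum, sum_const, card_univ, nsmul_eq_mul,
    hd_sum, hW_sum] at hsum
  linarith [mul_nonneg (Nat.cast_nonneg (Fintype.card ι) : (0 : ℝ) ≤ _)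
    (mul_nonneg (sub_nonneg.mpr he) (sq_nonneg V))]

section Bernstein

variable (u : ℤ × ℤ → ℝ) (j : Fin 4) (q : ℤ × ℤ) (K : ℕ) (M : ℝ)

def bernsteinFun (x : ℤ × ℤ) : ℝ :=
  ((K : ℝ) ^ 2 - distSq q x) ^ 2 * fwdDiff (unitDir j) u x ^ 2
    + 3 * K ^ 2 * fwdDiff (unitDir j) u x ^ 2 + 296 * K ^ 2 * u x ^ 2 + M ^ 2 * distSq q x

variable {u j q K M}

lemma laplacian_bernsteinFun_pos (hK : 1 ≤ K) (hM : 0 < M) {x : ℤ × ℤ}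
    (hx : distSq q x ≤ K ^ 2) (hu : laplacian u x = 0) (hu' : laplacian u (x + unitDir j) = 0) :
    0 < laplacian (bernsteinFun u j q K M) x := by
  have hv : laplacian (fwdDiff (unitDir j) u) x = 0 := by
    rw [laplacian_fwdDiff, hu, hu', sub_zero]
  unfold bernsteinFun
  rw [laplacian_add, laplacian_add, laplacian_add, laplacian_const_mul, laplacian_const_mul,
    laplacian_const_mul, laplacian_sq, laplacian_sq, laplacian_distSq, hv, hu, laplacian_apply]
  set v := fwdDiff (unitDir j) u
  have hW_sum : ∑ i, v (x + unitDir i) = Fintype.card (Fin 4) * v x := by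
    rw [laplacian_apply] at hv
    rw [Fintype.card_fin, Nat.cast_ofNat]
    linarith
  have hd_sum : ∑ i, ((distSq q (x + unitDir i) : ℝ) - distSq q x) = Fintype.card (Fin 4) := by
    have := laplacian_distSq q x
    rw [laplacian_apply] at this
    simp only [sum_sub_distrib, sum_const, card_univ, Fintype.card_fin, nsmul_eq_mul,
      Nat.cast_ofNat]
    linarith
  have hd : ∀ i, |(distSq q (x + unitDir i) : ℝ) - distSq q x| ≤ 3 * K := fun i ↦ by
    have := abs_distSq_add_unitDir_sub_le (Nat.cast_nonneg K) hx i
    have hK' : (1 : ℝ) ≤ K := by exact_mod_cast hK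
    calc |(distSq q (x + unitDir i) : ℝ) - distSq q x| ≤ 2 * K + 1 := by exact_mod_cast this
      _ ≤ 3 * K := by linarith
  have he : (K : ℝ) ^ 2 - distSq q x ≤ K ^ 2 := by
    have : (0 : ℝ) ≤ distSq q x := by unfold distSq; positivity
    linarith
  have hcore := bernstein_core he hd hd_sum hW_sum
  simp only [Fintype.card_fin, Nat.cast_ofNat, sub_sub_sub_cancel_right] at hcore
  have hgrad : v x ^ 2 ≤ ∑ i, fwdDiff (unitDir i) u x ^ 2 :=
    single_le_sum (f := fun i ↦ fwdDiff (unitDir i) u x ^ 2) (fun i _ ↦ sq_nonneg _) (mem_univ j)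
  have hvar : ∑ i, fwdDiff (unitDir i) v x ^ 2 = ∑ i, (v (x + unitDir i) - v x) ^ 2 := rfl
  have hgrad' := mul_le_mul_of_nonneg_left hgrad (by positivity : (0 : ℝ) ≤ 296 * K ^ 2)
  rw [hvar]
  linarith [pow_pos hM 2]

lemma bernsteinFun_center :
    (K : ℝ) ^ 4 * fwdDiff (unitDir j) u q ^ 2 ≤ bernsteinFun u j q K M q := by
  have : distSq q q = 0 := by simp [distSq]
  simp only [bernsteinFun, this, Int.cast_zero, sub_zero, mul_zero, add_zero]
  have : 0 ≤ 3 * (K : ℝ) ^ 2 * fwdDiff (unitDir j) u q ^ 2 + 296 * K ^ 2 * u q ^ 2 := by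
    positivity
  linarith

lemma bernsteinFun_le_of_lt_distSq (hK : 1 ≤ K) {x : ℤ × ℤ} (hx : K ^ 2 < distSq q x)
    (hx' : distSq q x ≤ (K + 1) ^ 2) (hux : |u x| ≤ M) (hux' : |u (x + unitDir j)| ≤ M) :
    bernsteinFun u j q K M x ≤ 348 * K ^ 2 * M ^ 2 := by
  have hK' : (1 : ℝ) ≤ K := by exact_mod_cast hK
  have hρ : (K : ℝ) ^ 2 < distSq q x := by exact_mod_cast hx
  have hρ' : (distSq q x : ℝ) ≤ (K + 1) ^ 2 := by exact_mod_cast hx'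
  have hη : ((K : ℝ) ^ 2 - distSq q x) ^ 2 ≤ 9 * K ^ 2 := by nlinarith
  have hv : fwdDiff (unitDir j) u x ^ 2 ≤ 4 * M ^ 2 := by
    have : |fwdDiff (unitDir j) u x| ≤ 2 * M := (abs_sub _ _).trans (by linarith)
    nlinarith [sq_abs (fwdDiff (unitDir j) u x), abs_nonneg (fwdDiff (unitDir j) u x)]
  have hu : u x ^ 2 ≤ M ^ 2 := by nlinarith [sq_abs (u x), abs_nonneg (u x)]
  have hρ4 : (distSq q x : ℝ) ≤ 4 * K ^ 2 := by nlinarith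
  unfold bernsteinFun
  linarith [mul_le_mul hη hv (sq_nonneg _) (by positivity),
    mul_le_mul_of_nonneg_left hv (by positivity : (0 : ℝ) ≤ 3 * K ^ 2),
    mul_le_mul_of_nonneg_left hu (by positivity : (0 : ℝ) ≤ 296 * K ^ 2),
    mul_le_mul_of_nonneg_left hρ4 (sq_nonneg M)]

end Bernstein

lemma mem_Q_add_of_distSq_le {K r : ℕ} {q x : ℤ × ℤ} (hq : q ∈ Q K)
    (h : distSq q x ≤ (r : ℤ) ^ 2) : x ∈ Q (K + r) := by
  obtain ⟨h₁, h₂⟩ := abs_sub_le_of_distSq_le (Nat.cast_nonneg r) h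
  simp only [mem_Q, abs_le] at hq h₁ h₂ ⊢
  push_cast
  omega

lemma sq_mul_fwdDiff_sq_le {N K : ℕ} {u : ℤ × ℤ → ℝ} (hu : DiscreteHarmonicOn N u)
    (hK : 1 ≤ K) (hKN : 2 * K + 2 ≤ N) {q : ℤ × ℤ} (hq : q ∈ Q K) (j : Fin 4) {M : ℝ}
    (hM : ∀ x ∈ Q N, |u x| ≤ M) :
    (K : ℝ) ^ 2 * fwdDiff (unitDir j) u q ^ 2 ≤ 348 * M ^ 2 := by
  have hqN : q ∈ Q N := Q_mono (by omega) hq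
  have hqjN : q + unitDir j ∈ Q N := Q_mono (by omega) (add_unitDir_mem_Q hq j)
  rcases ((abs_nonneg _).trans (hM q hqN)).eq_or_lt with rfl | hM0
  · have h₁ := abs_nonpos_iff.mp (hM q hqN)
    have h₂ := abs_nonpos_iff.mp (hM _ hqjN)
    simp [fwdDiff, h₁, h₂]
  set S := (Q N).filter fun x ↦ distSq q x ≤ ((K + 1 : ℕ) : ℤ) ^ 2
  have hqS : q ∈ S := mem_filter.mpr ⟨hqN, by simp only [distSq, sub_self]; positivity⟩
  obtain ⟨x, hxS, hxK, hmax⟩ := exists_max_not_of_laplacian_pos ⟨q, hqS⟩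
    (f := bernsteinFun u j q K M) (P := fun x ↦ distSq q x ≤ (K : ℤ) ^ 2) fun x _ hx ↦ by
      have hxQ : x ∈ Q (K + K) := mem_Q_add_of_distSq_le hq hx
      refine ⟨fun i ↦ mem_filter.mpr ⟨Q_mono (by omega) (add_unitDir_mem_Q hxQ i), ?_⟩,
        laplacian_bernsteinFun_pos hK hM0 hx (hu.laplacian_eq_zero (by omega) hxQ)
          (hu.laplacian_eq_zero (by omega) (add_unitDir_mem_Q hxQ j))⟩
      have := abs_distSq_add_unitDir_sub_le (Nat.cast_nonneg K) hx i
      rw [abs_le] at this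
      push_cast
      linarith
  obtain ⟨hxN, hx⟩ := mem_filter.mp hxS
  have hxQ : x ∈ Q (K + (K + 1)) := mem_Q_add_of_distSq_le hq hx
  have hbound := bernsteinFun_le_of_lt_distSq hK (not_le.mp hxK) (by exact_mod_cast hx)
    (hM x hxN) (hM _ (Q_mono (by omega) (add_unitDir_mem_Q hxQ j)))
  have hcenter := (bernsteinFun_center (M := M)).trans ((hmax q hqS).trans hbound)
  refine le_of_mul_le_mul_left ?_ (by positivity : (0 : ℝ) < K ^ 2)
  linear_combination hcenter

lemma exists_unitDir_of_adjacent {q q' : ℤ × ℤ} (h : |q.1 - q'.1| + |q.2 - q'.2| = 1) :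
    ∃ j, q' = q + unitDir j := by
  obtain ⟨a, b⟩ := q
  obtain ⟨c, d⟩ := q'
  have : (c = a + 1 ∧ d = b) ∨ (c = a - 1 ∧ d = b) ∨ (c = a ∧ d = b + 1) ∨
      (c = a ∧ d = b - 1) := by
    dsimp only at h
    rcases abs_cases (a - c) with ⟨h₁, _⟩ | ⟨h₁, _⟩ <;>
      rcases abs_cases (b - d) with ⟨h₂, _⟩ | ⟨h₂, _⟩ <;> omega
  rcases this with ⟨rfl, rfl⟩ | ⟨rfl, rfl⟩ | ⟨rfl, rfl⟩ | ⟨rfl, rfl⟩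
  exacts [⟨0, by simp [unitDir]⟩, ⟨1, by simp [unitDir, sub_eq_add_neg]⟩, ⟨2, by simp [unitDir]⟩,
    ⟨3, by simp [unitDir, sub_eq_add_neg]⟩]

lemma abs_fwdDiff_mul_le {N : ℕ} {u : ℤ × ℤ → ℝ} (hu : DiscreteHarmonicOn N u) (hN : 4 ≤ N)
    {q : ℤ × ℤ} (hq : q ∈ Q (N / 3)) (j : Fin 4) {M : ℝ} (hM : ∀ x ∈ Q N, |u x| ≤ M) :
    |fwdDiff (unitDir j) u q| * N ≤ 100 * M := by
  have hK := sq_mul_fwdDiff_sq_le hu (K := N / 3) (by omega) (by omega) hq j hM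
  have hNK : (N : ℝ) ≤ 5 * (N / 3 : ℕ) := by exact_mod_cast (by omega : N ≤ 5 * (N / 3))
  have hM0 : 0 ≤ M := (abs_nonneg _).trans (hM q (Q_mono (Nat.div_le_self N 3) hq))
  refine (sq_le_sq₀ (by positivity) (by positivity)).mp ?_
  calc (|fwdDiff (unitDir j) u q| * N) ^ 2 = fwdDiff (unitDir j) u q ^ 2 * N ^ 2 := by
        rw [mul_pow, sq_abs]
    _ ≤ fwdDiff (unitDir j) u q ^ 2 * (5 * (N / 3 : ℕ)) ^ 2 := by gcongr
    _ = 25 * ((N / 3 : ℕ) ^ 2 * fwdDiff (unitDir j) u q ^ 2) := by ring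
    _ ≤ 25 * (348 * M ^ 2) := by gcongr
    _ ≤ (100 * M) ^ 2 := by linarith [sq_nonneg M]

/-- Discrete gradient estimate: for adjacent `q, q' ∈ Q_{⌊N/3⌋}`,
`|u(q) - u(q')| ≤ C·N⁻¹·max_{Q_N} |u|`. -/
theorem discrete_gradient_estimate :
    ∃ C > (0 : ℝ), ∀ N : ℕ, 0 < N → ∀ u : ℤ × ℤ → ℝ, DiscreteHarmonicOn N u →
      ∀ q q' : ℤ × ℤ, q ∈ Q (N / 3) → q' ∈ Q (N / 3) →
        |q.1 - q'.1| + |q.2 - q'.2| = 1 →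
      ∀ M : ℝ, (∀ x ∈ Q N, |u x| ≤ M) → |u q - u q'| ≤ C * M / N := by
  refine ⟨100, by norm_num, fun N hN u hu q q' hq hq' hadj M hM ↦ ?_⟩
  obtain ⟨j, rfl⟩ := exists_unitDir_of_adjacent hadj
  have hN0 : (0 : ℝ) < N := by exact_mod_cast hN
  rw [abs_sub_comm, le_div_iff₀ hN0]
  change |fwdDiff (unitDir j) u q| * N ≤ 100 * M
  rcases lt_or_ge N 4 with hN4 | hN4
  · have hqN := Q_mono (Nat.div_le_self N 3) hq
    have hv : |fwdDiff (unitDir j) u q| ≤ 2 * M :=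
      (abs_sub _ _).trans (by linarith [hM _ (Q_mono (Nat.div_le_self N 3) hq'), hM q hqN])
    have hN3 : (N : ℝ) ≤ 3 := by exact_mod_cast (by omega : N ≤ 3)
    have hM0 : 0 ≤ M := (abs_nonneg _).trans (hM q hqN)
    calc |fwdDiff (unitDir j) u q| * N ≤ 2 * M * 3 := mul_le_mul hv hN3 hN0.le (by positivity)
      _ ≤ 100 * M := by linarith
  · exact abs_fwdDiff_mul_le hu hN4 hq j hM
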